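/- arXiv:1210.3229 — 2 statements merged into one kernel-verified Lean document; each statement's English description precedes it below -/
import Mathlib

section
/- For every integer m ≥ 1, the joint density J_m is continuous on the domain {(t₀, …, t_m) : t_j > 0 for all j and Σ_{j=0}^{m} t_j < Δ} (on this domain none of the discontinuity hyperplanes Σ_{j=i+1}^{m} t_j = Δ, i = −1, …, m−1, is met). -/
open Real Set Filter MeasureTheory

/-- Conditional ISI density `F t s` given time-to-live `s` of the feedback impulse. -/
noncomputable def F (lam τ t s : ℝ) : ℝ :=
  if 0 < t ∧ t < s then lam ^ 2 * t * Real.exp (-lam * t)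
  else if s ≤ t ∧ t ≤ s + τ then
    (1 + lam * s) * Real.exp (-lam * s) * (lam ^ 2 * (t - s) * Real.exp (-lam * (t - s)))
  else 0

/-- Regular part of the stationary time-to-live density. -/
noncomputable def g (lam A B s : ℝ) : ℝ := A + B * Real.exp (2 * lam * s)

/-- Weight of the singular (Dirac) part of the stationary time-to-live distribution. -/
noncomputable def aC (lam Δ : ℝ) : ℝ :=
  4 * Real.exp (2 * lam * Δ) / ((3 + 2 * lam * Δ) * Real.exp (2 * lam * Δ) + 1)

/-- `T t p q = Σ_{j=p}^{q-1} t_j` (empty sums are `0`). -/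
def T {n : ℕ} (t : Fin n → ℝ) (p q : ℕ) : ℝ :=
  ∑ j : Fin n, if p ≤ (j : ℕ) ∧ (j : ℕ) < q then t j else 0

/-- `Ilow lam Δ τ A B i t` is the term `I_i`, `0 ≤ i ≤ m-1`, of the joint ISI density. -/
noncomputable def Ilow (lam Δ τ A B : ℝ) {m : ℕ} (i : ℕ) (t : Fin (m + 1) → ℝ) : ℝ :=
  (∏ k : Fin (m + 1), if i + 1 ≤ (k : ℕ) then F lam τ (t k) (Δ - T t (i + 1) (k : ℕ)) else 1) *
    ∫ s in T t 0 i..T t 0 (i + 1),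
      g lam A B s *
        ∏ k : Fin (m + 1), if (k : ℕ) ≤ i then F lam τ (t k) (s - T t 0 (k : ℕ)) else 1

/-- `Itop lam Δ τ A B t` is the term `I_m` of the joint ISI density. -/
noncomputable def Itop (lam Δ τ A B : ℝ) {m : ℕ} (t : Fin (m + 1) → ℝ) : ℝ :=
  (∫ s in T t 0 m..Δ, g lam A B s * ∏ k : Fin (m + 1), F lam τ (t k) (s - T t 0 (k : ℕ)))
    + aC lam Δ * ∏ k : Fin (m + 1), F lam τ (t k) (Δ - T t 0 (k : ℕ))

/-- `J lam Δ τ A B t = Σ_{i=0}^{m} I_i(t)`, the joint density of `m+1` consecutive ISIs. -/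
noncomputable def J (lam Δ τ A B : ℝ) {m : ℕ} (t : Fin (m + 1) → ℝ) : ℝ :=
  (∑ i ∈ Finset.range m, Ilow lam Δ τ A B i t) + Itop lam Δ τ A B t

/-!
On the domain every factor of `J` has a known branch of `F`. The prefactors of `I_i` and the
term `a ∏ F(t_k, Δ - …)` see time-to-live `Δ - Σ … > t_k`, hence the first branch. For `s` in the
window `(Σ_{j<i} t_j, Σ_{j≤i} t_j]` the factors `k < i` of the integrand of `I_i` are again in the
first branch, while the factor `k = i` is in the second one (the third is excluded because
`t_i < Δ < τ`). So each integrand agrees on its window with a function that is jointly continuous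
in `(t, s)`, and integrals of such functions between continuous bounds depend continuously on `t`.
The integrand of `I_m` jumps at `s = Σ_{j≤m} t_j`; splitting its integral there, the part up to `Δ`
has all factors in the first branch.
-/

open Function
open scoped Interval

noncomputable def Fpre (lam t : ℝ) : ℝ := lam ^ 2 * t * Real.exp (-lam * t)

noncomputable def Fpost (lam t s : ℝ) : ℝ :=
  (1 + lam * s) * Real.exp (-lam * s) * (lam ^ 2 * (t - s) * Real.exp (-lam * (t - s)))

attribute [local fun_prop] Continuous.if_const

@[fun_prop]
lemma continuous_Fpre (lam : ℝ) : Continuous (Fpre lam) := by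
  unfold Fpre; fun_prop

@[fun_prop]
lemma continuous_Fpost (lam : ℝ) : Continuous fun p : ℝ × ℝ => Fpost lam p.1 p.2 := by
  unfold Fpost; fun_prop

@[fun_prop]
lemma continuous_g (lam A B : ℝ) : Continuous (g lam A B) := by
  unfold g; fun_prop

lemma F_eq_Fpre {lam τ t s : ℝ} (ht : 0 < t) (hts : t < s) : F lam τ t s = Fpre lam t :=
  if_pos ⟨ht, hts⟩

lemma F_eq_Fpost {lam τ t s : ℝ} (hst : s ≤ t) (hts : t ≤ s + τ) :
    F lam τ t s = Fpost lam t s := by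
  rw [F, if_neg fun h => h.2.not_ge hst, if_pos ⟨hst, hts⟩, Fpost]

section T

variable {n : ℕ}

@[fun_prop]
lemma continuous_T (p q : ℕ) : Continuous fun t : Fin n → ℝ => T t p q := by
  unfold T; fun_prop

variable {t : Fin n → ℝ} {p q p' q' : ℕ}

lemma T_succ (k : Fin n) (hp : p ≤ k) : T t p (k + 1) = T t p k + t k := by
  simp only [T]
  rw [← Fintype.sum_ite_eq' k t, ← Finset.sum_add_distrib]
  refine Finset.sum_congr rfl fun j _ => ?_
  rcases lt_trichotomy (j : ℕ) k with h | h | h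
  · simp [h, h.trans (Nat.lt_succ_self _), Fin.ne_of_lt h]
  · simp [Fin.ext h, hp]
  · simp [h.not_gt, Fin.ne_of_gt h, show ¬ (j : ℕ) < k + 1 by omega]

lemma T_nonneg (ht : ∀ j, 0 ≤ t j) : 0 ≤ T t p q :=
  Finset.sum_nonneg fun j _ => by split_ifs <;> simp [ht j]

lemma T_mono (ht : ∀ j, 0 ≤ t j) (hp : p' ≤ p) (hq : q ≤ q') : T t p q ≤ T t p' q' :=
  Finset.sum_le_sum fun j _ => by
    split_ifs with h h'
    · exact le_rfl
    · exact absurd ⟨hp.trans h.1, h.2.trans_le hq⟩ h'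
    · exact ht j
    · exact le_rfl

lemma le_T (ht : ∀ j, 0 ≤ t j) (k : Fin n) : t k ≤ T t 0 n := by
  have := T_succ (t := t) k (Nat.zero_le _)
  have := T_mono (p := 0) (p' := 0) ht le_rfl (show (k : ℕ) + 1 ≤ n from k.isLt)
  linarith [T_nonneg (p := 0) (q := k) ht]

end T

section Integral

variable {X E : Type*} [TopologicalSpace X] [NormedAddCommGroup E] [NormedSpace ℝ E]
  {μ : Measure ℝ} [IsLocallyFiniteMeasure μ] [NullSingletonClass μ]
  {f φ ψ : X → ℝ → E} {a b c : X → ℝ} {U : Set X}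

lemma continuous_intervalIntegral_of_continuous_uncurry (hφ : Continuous (uncurry φ))
    (ha : Continuous a) (hb : Continuous b) :
    Continuous fun x => ∫ s in a x..b x, φ x s ∂μ := by
  have hint x u v : IntervalIntegrable (φ x) μ u v := (hφ.uncurry_left x).intervalIntegrable u v
  have hsub : (fun x => ∫ s in a x..b x, φ x s ∂μ)
      = fun x => (∫ s in (0 : ℝ)..b x, φ x s ∂μ) - ∫ s in (0 : ℝ)..a x, φ x s ∂μ :=
    funext fun x => (intervalIntegral.integral_interval_sub_left (hint _ _ _) (hint _ _ _)).symm
  rw [hsub]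
  exact (intervalIntegral.continuous_parametric_intervalIntegral_of_continuous hφ hb).sub
    (intervalIntegral.continuous_parametric_intervalIntegral_of_continuous hφ ha)

lemma continuousOn_intervalIntegral_of_eqOn_uIoc (hφ : Continuous (uncurry φ))
    (ha : Continuous a) (hb : Continuous b) (hfφ : ∀ x ∈ U, EqOn (f x) (φ x) (Ι (a x) (b x))) :
    ContinuousOn (fun x => ∫ s in a x..b x, f x s ∂μ) U :=
  (continuous_intervalIntegral_of_continuous_uncurry hφ ha hb).continuousOn.congr fun x hx =>
    intervalIntegral.integral_congr_ae (.of_forall (hfφ x hx))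

lemma continuousOn_intervalIntegral_of_eqOn_uIoc₂ (hφ : Continuous (uncurry φ))
    (hψ : Continuous (uncurry ψ)) (ha : Continuous a) (hb : Continuous b) (hc : Continuous c)
    (hfφ : ∀ x ∈ U, EqOn (f x) (φ x) (Ι (a x) (b x)))
    (hfψ : ∀ x ∈ U, EqOn (f x) (ψ x) (Ι (b x) (c x))) :
    ContinuousOn (fun x => ∫ s in a x..c x, f x s ∂μ) U := by
  refine ((continuousOn_intervalIntegral_of_eqOn_uIoc (μ := μ) hφ ha hb hfφ).add
    (continuousOn_intervalIntegral_of_eqOn_uIoc (μ := μ) hψ hb hc hfψ)).congr fun x hx => ?_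
  have hint (θ : X → ℝ → E) (hθ : Continuous (uncurry θ)) u v
      (h : EqOn (f x) (θ x) (Ι u v)) : IntervalIntegrable (f x) μ u v :=
    ((hθ.uncurry_left x).intervalIntegrable u v).congr h.symm
  exact (intervalIntegral.integral_add_adjacent_intervals
    (hint φ hφ _ _ (hfφ x hx)) (hint ψ hψ _ _ (hfψ x hx))).symm

end Integral

section Window

variable {lam τ s : ℝ} {n : ℕ} {t : Fin n → ℝ} {i p : ℕ}

lemma F_sub_T_eq_Fpre {k : Fin n} (hk : 0 < t k) (hp : p ≤ k) (hs : T t p (k + 1) < s) :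
    F lam τ (t k) (s - T t p k) = Fpre lam (t k) :=
  F_eq_Fpre hk (by linarith [T_succ (t := t) k hp])

lemma F_Δ_sub_T_eq_Fpre {Δ : ℝ} (ht : ∀ j, 0 < t j) (hΔ : T t 0 n < Δ) {k : Fin n} (hp : p ≤ k) :
    F lam τ (t k) (Δ - T t p k) = Fpre lam (t k) :=
  F_sub_T_eq_Fpre (ht k) hp ((T_mono (fun j => (ht j).le) (Nat.zero_le _) k.isLt).trans_lt hΔ)

/-- The factors of the integrand of `I_i` on the window `T t 0 i < s ≤ T t 0 (i + 1)`, where the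
feedback impulse arrives during the `i`-th interval. -/
noncomputable def Fwin (lam : ℝ) (i : ℕ) (t : Fin n → ℝ) (s : ℝ) (k : Fin n) : ℝ :=
  if (k : ℕ) < i then Fpre lam (t k) else if (k : ℕ) = i then Fpost lam (t k) (s - T t 0 k) else 1

@[fun_prop]
lemma continuous_Fwin (lam : ℝ) (i : ℕ) (k : Fin n) :
    Continuous fun x : (Fin n → ℝ) × ℝ => Fwin lam i x.1 x.2 k := by
  unfold Fwin; fun_prop

lemma F_eq_Fwin (ht : ∀ j, 0 < t j) (hτ : ∀ j, t j ≤ τ) (hs : s ∈ Ioc (T t 0 i) (T t 0 (i + 1)))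
    {k : Fin n} (hk : (k : ℕ) ≤ i) : F lam τ (t k) (s - T t 0 k) = Fwin lam i t s k := by
  have ht₀ j : 0 ≤ t j := (ht j).le
  rcases hk.lt_or_eq with hk | rfl
  · rw [Fwin, if_pos hk]
    exact F_sub_T_eq_Fpre (ht k) (Nat.zero_le _) ((T_mono ht₀ le_rfl hk).trans_lt hs.1)
  · rw [Fwin, if_neg (lt_irrefl _), if_pos rfl]
    have := T_succ (t := t) k (Nat.zero_le _)
    exact F_eq_Fpost (by linarith [hs.2]) (by linarith [hs.1, hτ k, T_nonneg (p := 0) (q := k) ht₀])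

lemma prod_F_eq_prod_Fwin (ht : ∀ j, 0 < t j) (hτ : ∀ j, t j ≤ τ)
    (hs : s ∈ Ioc (T t 0 i) (T t 0 (i + 1))) :
    ∏ k : Fin n, (if (k : ℕ) ≤ i then F lam τ (t k) (s - T t 0 k) else 1)
      = ∏ k : Fin n, Fwin lam i t s k := by
  refine Finset.prod_congr rfl fun k _ => ?_
  split_ifs with hk
  · exact F_eq_Fwin ht hτ hs hk
  · simp [Fwin, show ¬ (k : ℕ) < i by omega, show (k : ℕ) ≠ i by omega]

end Window

variable {lam Δ τ A B : ℝ} {m : ℕ}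

lemma continuousOn_Ilow (hΔτ : Δ < τ) (i : ℕ) :
    ContinuousOn (Ilow lam Δ τ A B (m := m) i)
      {t : Fin (m + 1) → ℝ | (∀ j, 0 < t j) ∧ T t 0 (m + 1) < Δ} := by
  refine ContinuousOn.mul ?_ ?_
  · refine Continuous.continuousOn (f := fun t : Fin (m + 1) → ℝ =>
      ∏ k : Fin (m + 1), if i + 1 ≤ (k : ℕ) then Fpre lam (t k) else 1) (by fun_prop)
      |>.congr fun t ⟨ht, hΔ⟩ => Finset.prod_congr rfl fun k _ => ?_
    split_ifs with hk
    · exact F_Δ_sub_T_eq_Fpre ht hΔ hk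
    · rfl
  · refine continuousOn_intervalIntegral_of_eqOn_uIoc
      (φ := fun t s => g lam A B s * ∏ k, Fwin lam i t s k) (by fun_prop) (continuous_T _ _)
      (continuous_T _ _) fun t ⟨ht, hΔ⟩ s hs => ?_
    have ht₀ j : 0 ≤ t j := (ht j).le
    rw [uIoc_of_le (T_mono ht₀ le_rfl (Nat.le_succ i))] at hs
    simp only
    rw [prod_F_eq_prod_Fwin ht (fun j => ((le_T ht₀ j).trans_lt (hΔ.trans hΔτ)).le) hs]

lemma continuousOn_Itop (hΔτ : Δ < τ) :
    ContinuousOn (Itop lam Δ τ A B (m := m))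
      {t : Fin (m + 1) → ℝ | (∀ j, 0 < t j) ∧ T t 0 (m + 1) < Δ} := by
  refine ContinuousOn.add ?_ (continuousOn_const.mul ?_)
  · refine continuousOn_intervalIntegral_of_eqOn_uIoc₂
      (φ := fun t s => g lam A B s * ∏ k, Fwin lam m t s k)
      (ψ := fun t s => g lam A B s * ∏ k, Fpre lam (t k)) (b := fun t => T t 0 (m + 1))
      (by fun_prop) (by fun_prop) (continuous_T _ _) (continuous_T _ _) continuous_const
      (fun t ⟨ht, hΔ⟩ s hs => ?_) (fun t ⟨ht, hΔ⟩ s hs => ?_)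
    · have ht₀ j : 0 ≤ t j := (ht j).le
      rw [uIoc_of_le (T_mono ht₀ le_rfl (Nat.le_succ m))] at hs
      have := prod_F_eq_prod_Fwin (lam := lam) ht
        (fun j => ((le_T ht₀ j).trans_lt (hΔ.trans hΔτ)).le) hs
      simp only [Fin.is_le, if_true] at this
      simp only [this]
    · rw [uIoc_of_le hΔ.le] at hs
      simp only
      congr 1
      refine Finset.prod_congr rfl fun k _ => F_sub_T_eq_Fpre (ht k) (Nat.zero_le _) ?_
      exact (T_mono (fun j => (ht j).le) le_rfl k.isLt).trans_lt hs.1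
  · refine Continuous.continuousOn (f := fun t : Fin (m + 1) → ℝ => ∏ k, Fpre lam (t k))
      (by fun_prop) |>.congr fun t ⟨ht, hΔ⟩ =>
      Finset.prod_congr rfl fun k _ => F_Δ_sub_T_eq_Fpre ht hΔ (Nat.zero_le _)

theorem stmt14_general (lam Δ τ A B : ℝ) (hΔτ : Δ < τ) (m : ℕ) :
    ContinuousOn (J lam Δ τ A B (m := m))
      {t : Fin (m + 1) → ℝ | (∀ j, 0 < t j) ∧ T t 0 (m + 1) < Δ} :=
  (continuousOn_finsetSum _ fun i _ => continuousOn_Ilow hΔτ i).add (continuousOn_Itop hΔτ)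

/-- for every `m ≥ 1`, the joint density `J_m` is continuous on
`{t_j > 0 ∀ j, Σ_{j=0}^{m} t_j < Δ}`. -/
theorem stmt14 (lam Δ τ A B : ℝ) (hlam : 0 < lam) (hΔ : 0 < Δ) (hΔτ : Δ < τ)
    (m : ℕ) (hm : 1 ≤ m) :
    ContinuousOn (J lam Δ τ A B (m := m))
      {t : Fin (m + 1) → ℝ | (∀ j, 0 < t j) ∧ T t 0 (m + 1) < Δ} :=
  stmt14_general lam Δ τ A B hΔτ m
end

section
/- (Non-Markovian property of the output interspike-interval stream.) Assume g(s) > 0 for all s ∈ (0, Δ). Then for every integer m ≥ 1 there exists NO function Q : (0, ∞)^m → ℝ such that J_m(t₀, t₁, …, t_m) = Q(t₁, …, t_m) · J_{m−1}(t₀, …, t_{m−1}) for all tuples with t_j > 0 for all j, Σ_{j=0}^{m−1} t_j < Δ, and t_m < τ. Equivalently, on this domain the conditional density J_m / J_{m−1} of the next interspike interval given the preceding m intervals necessarily depends on the earliest interval t₀; hence the output interspike-interval sequence is not a Markov chain of any finite order. -/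
/-!
Fix `t₁ = … = t_{m-1} = d` with `m d = Δ`, and `t_m ∈ (Δ, τ)`, and let only `x = t₀ ∈ (0, d)` vary,
so that `Q` becomes a constant `q`. On this range every piece of `J_m` and `J_{m-1}` can be
integrated in closed form: each is `e^{-λx}` times a polynomial of degree at most four plus
`e^{2λx}` times an affine function of `x`. The `x⁴` and `x³` terms come from the term `I_m` of
`J_m`, where the last interval outlives the feedback impulse, and from the terms `I_0`, which
only contribute multiples of `A`. So the `x⁴` coefficient of `J_m - q J_{m-1}` is a positive
multiple of `A`, and once `A = 0` its `x³` coefficient is a negative multiple of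
`B e^{2λΔ}/2 + aλ`. Since such exponential polynomials vanish on an interval only if all
their coefficients vanish, `J_m = q J_{m-1}` forces `A = 0` and then `B e^{2λΔ}/2 + aλ = 0`,
which contradicts `g > 0`.
-/

open Real Set Filter MeasureTheory

noncomputable def freeDensity (lam t : ℝ) : ℝ := lam ^ 2 * t * exp (-lam * t)

section Branches

variable {lam τ t s : ℝ}

lemma freeDensity_pos (hlam : 0 < lam) (ht : 0 < t) : 0 < freeDensity lam t := by
  unfold freeDensity; positivity

lemma F_of_lt (ht : 0 < t) (hts : t < s) : F lam τ t s = freeDensity lam t := by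
  rw [F, if_pos ⟨ht, hts⟩, freeDensity]

lemma F_of_le (hst : s ≤ t) (hts : t ≤ s + τ) :
    F lam τ t s = lam ^ 2 * ((1 + lam * s) * (t - s)) * exp (-lam * t) := by
  have hexp : exp (-lam * s) * exp (-lam * (t - s)) = exp (-lam * t) := by
    rw [← exp_add]; ring_nf
  rw [F, if_neg (fun h => h.2.not_ge hst), if_pos ⟨hst, hts⟩]
  linear_combination lam ^ 2 * ((1 + lam * s) * (t - s)) * hexp

end Branches

section PartialSums

variable {n : ℕ}

lemma T_zero_zero (t : Fin n → ℝ) : T t 0 0 = 0 := by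
  simp [T]

lemma T_zero_succ (t : Fin n → ℝ) (k : Fin n) : T t 0 (k + 1) = T t 0 k + t k := by
  rw [T, T, ← Fintype.sum_ite_eq' k t, ← Finset.sum_add_distrib]
  refine Finset.sum_congr rfl fun j _ => ?_
  by_cases hjk : j = k
  · subst hjk; simp
  · have hlt : (j : ℕ) < k + 1 ↔ (j : ℕ) < k := by have := Fin.val_ne_of_ne hjk; omega
    simp only [zero_le, true_and, hlt, hjk, if_false, add_zero]

lemma T_zero_mono {t : Fin n → ℝ} (ht : ∀ k, 0 ≤ t k) : Monotone (T t 0) := by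
  intro p q hpq
  refine Finset.sum_le_sum fun j _ => ?_
  by_cases hj : (j : ℕ) < p
  · simp [hj, hj.trans_le hpq]
  · simp only [zero_le, true_and, hj, if_false]
    split_ifs <;> simp [ht j]

lemma T_cons_zero_succ (x : ℝ) (v : Fin n → ℝ) (k : ℕ) :
    T (Fin.cons x v : Fin (n + 1) → ℝ) 0 (k + 1) = x + T v 0 k := by
  simp [T, Fin.sum_univ_succ]

lemma T_cons_succ_succ (x : ℝ) (v : Fin n → ℝ) (p q : ℕ) :
    T (Fin.cons x v : Fin (n + 1) → ℝ) (p + 1) (q + 1) = T v p q := by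
  simp [T, Fin.sum_univ_succ]

lemma T_init_zero_last (w : Fin (n + 1) → ℝ) : T (Fin.init w) 0 n = T w 0 n := by
  simp [T, Fin.sum_univ_castSucc, Fin.init]

end PartialSums

noncomputable def freeDensityProd {n : ℕ} (lam : ℝ) (t : Fin n → ℝ) (i : ℕ) : ℝ :=
  ∏ k : Fin n, if (k : ℕ) < i then freeDensity lam (t k) else 1

section Products

variable {n : ℕ} {lam τ : ℝ} {t : Fin n → ℝ}

lemma F_eq_freeDensity_of_lt (ht : ∀ k, 0 < t k) (k : Fin n) {s : ℝ}
    (hs : T t 0 (k + 1) < s) : F lam τ (t k) (s - T t 0 k) = freeDensity lam (t k) :=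
  F_of_lt (ht k) (by rw [T_zero_succ] at hs; linarith)

lemma prod_F_of_T_lt (ht : ∀ k, 0 < t k) (i : Fin n) {s : ℝ} (hs : T t 0 i < s) :
    (∏ k : Fin n, if (k : ℕ) ≤ i then F lam τ (t k) (s - T t 0 k) else 1)
      = freeDensityProd lam t i * F lam τ (t i) (s - T t 0 i) := by
  rw [freeDensityProd, ← Fintype.prod_ite_eq' i (fun k => F lam τ (t k) (s - T t 0 k)),
    ← Finset.prod_mul_distrib]
  refine Finset.prod_congr rfl fun k _ => ?_
  rcases lt_trichotomy (k : ℕ) i with hki | hki | hki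
  · have hk : T t 0 (k + 1) < s := (T_zero_mono (fun j => (ht j).le) hki).trans_lt hs
    simp [hki.le, hki, Fin.ne_of_lt hki, F_eq_freeDensity_of_lt ht k hk]
  · obtain rfl : k = i := Fin.ext hki
    simp
  · simp [hki.not_ge, hki.not_gt, Fin.ne_of_gt hki]

lemma prod_F_of_T_lt_all (ht : ∀ k, 0 < t k) {s : ℝ} (hs : T t 0 n < s) :
    ∏ k : Fin n, F lam τ (t k) (s - T t 0 k) = freeDensityProd lam t n := by
  refine Finset.prod_congr rfl fun k _ => ?_
  rw [if_pos k.isLt]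
  exact F_eq_freeDensity_of_lt ht k ((T_zero_mono (fun j => (ht j).le) k.isLt).trans_lt hs)

lemma freeDensityProd_pos (hlam : 0 < lam) (ht : ∀ k, 0 < t k) (i : ℕ) :
    0 < freeDensityProd lam t i :=
  Finset.prod_pos fun k _ => by split_ifs <;> simp [freeDensity_pos hlam (ht k)]

lemma freeDensityProd_zero : freeDensityProd lam t 0 = 1 := by
  simp [freeDensityProd]

lemma freeDensityProd_cons_succ (x : ℝ) (v : Fin n → ℝ) (i : ℕ) :
    freeDensityProd lam (Fin.cons x v : Fin (n + 1) → ℝ) (i + 1)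
      = freeDensity lam x * freeDensityProd lam v i := by
  simp [freeDensityProd, Fin.prod_univ_succ]

end Products

lemma prod_ite_val_le_last {n : ℕ} (f : Fin (n + 1) → ℝ) :
    (∏ k : Fin (n + 1), if (k : ℕ) ≤ n then f k else 1) = ∏ k, f k :=
  Finset.prod_congr rfl fun k _ => if_pos (Fin.is_le k)

lemma prod_F_of_T_last_lt {n : ℕ} {lam τ s : ℝ} {t : Fin (n + 1) → ℝ} (ht : ∀ k, 0 < t k)
    (hs : T t 0 n < s) : ∏ k, F lam τ (t k) (s - T t 0 k)
      = freeDensityProd lam t n * F lam τ (t (Fin.last n)) (s - T t 0 n) := by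
  simpa [prod_ite_val_le_last] using prod_F_of_T_lt (lam := lam) (τ := τ) ht (Fin.last n) hs

section Integrals

variable {lam A B : ℝ}

lemma intervalIntegral_congr_Ioo {f h : ℝ → ℝ} {a b : ℝ} (hab : a ≤ b)
    (heq : EqOn f h (Ioo a b)) : ∫ x in a..b, f x = ∫ x in a..b, h x := by
  rw [intervalIntegral.integral_of_le hab, intervalIntegral.integral_of_le hab,
    integral_Ioc_eq_integral_Ioo, integral_Ioc_eq_integral_Ioo,
    setIntegral_congr_fun measurableSet_Ioo heq]

lemma IntervalIntegrable.of_eqOn_Ioo {f h : ℝ → ℝ} {a b : ℝ} (hab : a ≤ b)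
    (heq : EqOn f h (Ioo a b)) (hh : Continuous h) : IntervalIntegrable f volume a b := by
  rw [intervalIntegrable_iff_integrableOn_Ioo_of_le hab]
  exact (hh.integrableOn_Icc.mono_set Ioo_subset_Icc_self).congr_fun heq.symm measurableSet_Ioo

lemma hasDerivAt_exp_const_mul (μ s : ℝ) :
    HasDerivAt (fun s => exp (μ * s)) (exp (μ * s) * μ) s := by
  simpa using ((hasDerivAt_id s).const_mul μ).exp

lemma exp_two_mul_add (lam x y : ℝ) :
    exp (2 * lam * (x + y)) = exp (2 * lam * x) * exp (2 * lam * y) := by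
  rw [mul_add, exp_add]

lemma integral_g (hlam : lam ≠ 0) (a b : ℝ) :
    ∫ s in a..b, g lam A B s
      = A * (b - a) + B * (exp (2 * lam * b) - exp (2 * lam * a)) / (2 * lam) := by
  have hderiv : ∀ s ∈ uIcc a b, HasDerivAt
      (fun s => A * s + B * exp (2 * lam * s) / (2 * lam)) (g lam A B s) s := by
    intro s _
    refine (((hasDerivAt_id s).const_mul A).add
      (((hasDerivAt_exp_const_mul (2 * lam) s).const_mul B).div_const (2 * lam))).congr_deriv ?_
    simp only [g]
    field_simp
  rw [intervalIntegral.integral_eq_sub_of_hasDerivAt hderiv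
    ((by unfold g; fun_prop : Continuous (g lam A B)).intervalIntegrable a b)]
  field_simp
  ring

lemma integral_g_mul_branch (hlam : lam ≠ 0) (c d t : ℝ) :
    ∫ s in c..d, g lam A B s * ((1 + lam * (s - c)) * (t - (s - c)))
      = A * (t * (d - c) + (lam * t - 1) * (d - c) ^ 2 / 2 - lam * (d - c) ^ 3 / 3)
        + B * (exp (2 * lam * d) * (-(d - c) ^ 2 / 2 + t * (d - c) / 2 + t / (4 * lam))
          - exp (2 * lam * c) * (t / (4 * lam))) := by
  have hderiv : ∀ s ∈ uIcc c d, HasDerivAt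
      (fun s => A * (t * (s - c) + (lam * t - 1) / 2 * (s - c) ^ 2 - lam / 3 * (s - c) ^ 3)
        + B * (exp (2 * lam * s) * (-(1 / 2) * (s - c) ^ 2 + t / 2 * (s - c) + t / (4 * lam))))
      (g lam A B s * ((1 + lam * (s - c)) * (t - (s - c)))) s := by
    intro s _
    have hu : HasDerivAt (fun s => s - c) 1 s := (hasDerivAt_id s).sub_const c
    have hpoly := ((hu.const_mul t).add ((hu.fun_pow 2).const_mul ((lam * t - 1) / 2))).sub
      ((hu.fun_pow 3).const_mul (lam / 3))
    have hexp := (hasDerivAt_exp_const_mul (2 * lam) s).mul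
      ((((hu.fun_pow 2).const_mul (-(1 / 2))).add (hu.const_mul (t / 2))).add_const (t / (4 * lam)))
    refine ((hpoly.const_mul A).add (hexp.const_mul B)).congr_deriv ?_
    simp only [g, Pi.add_apply]
    field_simp
    ring
  have hcont : Continuous fun s => g lam A B s * ((1 + lam * (s - c)) * (t - (s - c))) := by
    unfold g; fun_prop
  rw [intervalIntegral.integral_eq_sub_of_hasDerivAt hderiv (hcont.intervalIntegrable c d)]
  field_simp
  ring

end Integrals

noncomputable def segInt (lam τ A B : ℝ) {n : ℕ} (i : ℕ) (t : Fin n → ℝ) : ℝ :=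
  ∫ s in T t 0 i..T t 0 (i + 1),
    g lam A B s * ∏ k : Fin n, if (k : ℕ) ≤ i then F lam τ (t k) (s - T t 0 (k : ℕ)) else 1

section Reduction

variable {n : ℕ} {lam Δ τ A B : ℝ}

lemma segInt_eq {t : Fin n → ℝ} (ht : ∀ k, 0 < t k) (i : Fin n) (hiτ : t i ≤ τ) :
    segInt lam τ A B i t = freeDensityProd lam t i * (lam ^ 2 * exp (-lam * t i)) *
      ∫ s in T t 0 i..T t 0 i + t i,
        g lam A B s * ((1 + lam * (s - T t 0 i)) * (t i - (s - T t 0 i))) := by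
  rw [segInt, T_zero_succ, ← intervalIntegral.integral_const_mul]
  refine intervalIntegral_congr_Ioo (by linarith [ht i]) fun s hs => ?_
  rw [prod_F_of_T_lt ht i hs.1, F_of_le (by linarith [hs.2]) (by linarith [hs.1])]
  ring

lemma Itop_eq_of_sub_le_last {t : Fin (n + 1) → ℝ} (ht : ∀ k, 0 < t k) (hT : T t 0 n < Δ)
    (hΔt : Δ - T t 0 n ≤ t (Fin.last n)) (htτ : t (Fin.last n) ≤ τ) :
    Itop lam Δ τ A B t = freeDensityProd lam t n * (lam ^ 2 * exp (-lam * t (Fin.last n))) *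
      ((∫ s in T t 0 n..Δ,
          g lam A B s * ((1 + lam * (s - T t 0 n)) * (t (Fin.last n) - (s - T t 0 n))))
        + aC lam Δ * ((1 + lam * (Δ - T t 0 n)) * (t (Fin.last n) - (Δ - T t 0 n)))) := by
  have hprod : ∀ s, T t 0 n < s → s ≤ Δ → ∏ k, F lam τ (t k) (s - T t 0 k)
      = freeDensityProd lam t n * (lam ^ 2 * ((1 + lam * (s - T t 0 n))
          * (t (Fin.last n) - (s - T t 0 n))) * exp (-lam * t (Fin.last n))) := by
    intro s hs hsΔ
    rw [prod_F_of_T_last_lt ht hs, F_of_le (by linarith) (by linarith)]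
  rw [Itop, mul_add, ← intervalIntegral.integral_const_mul, hprod Δ hT le_rfl,
    intervalIntegral_congr_Ioo hT.le fun s hs => by rw [hprod s hs.1 hs.2.le]]
  congr 1
  · congr 1; funext s; ring
  · ring

lemma Itop_eq_of_lt {t : Fin (n + 1) → ℝ} (ht : ∀ k, 0 < t k) (htτ : t (Fin.last n) ≤ τ)
    (hT : T t 0 (n + 1) < Δ) :
    Itop lam Δ τ A B t = segInt lam τ A B n t
      + freeDensityProd lam t (n + 1) * ((∫ s in T t 0 (n + 1)..Δ, g lam A B s) + aC lam Δ) := by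
  have hsucc : T t 0 (n + 1) = T t 0 n + t (Fin.last n) := by
    simpa using T_zero_succ t (Fin.last n)
  have hfirst : EqOn (fun s => g lam A B s * ∏ k, F lam τ (t k) (s - T t 0 k))
      (fun s => freeDensityProd lam t n * (lam ^ 2 * exp (-lam * t (Fin.last n))) *
        (g lam A B s * ((1 + lam * (s - T t 0 n)) * (t (Fin.last n) - (s - T t 0 n)))))
      (Ioo (T t 0 n) (T t 0 (n + 1))) := by
    intro s hs
    rw [hsucc] at hs
    dsimp only
    rw [prod_F_of_T_last_lt ht hs.1, F_of_le (by linarith [hs.2]) (by linarith [hs.1])]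
    ring
  have hsecond : EqOn (fun s => g lam A B s * ∏ k, F lam τ (t k) (s - T t 0 k))
      (fun s => freeDensityProd lam t (n + 1) * g lam A B s) (Ioo (T t 0 (n + 1)) Δ) := by
    intro s hs
    dsimp only
    rw [prod_F_of_T_lt_all ht hs.1]
    ring
  have hTn : T t 0 n ≤ T t 0 (n + 1) := by linarith [ht (Fin.last n)]
  rw [Itop, ← intervalIntegral.integral_add_adjacent_intervals
    (IntervalIntegrable.of_eqOn_Ioo hTn hfirst (by unfold g; fun_prop))
    (IntervalIntegrable.of_eqOn_Ioo hT.le hsecond (by unfold g; fun_prop)),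
    intervalIntegral_congr_Ioo hT.le hsecond, intervalIntegral.integral_const_mul,
    prod_F_of_T_lt_all ht hT]
  simp only [segInt, prod_ite_val_le_last]
  ring

lemma exists_Ilow_cons_eq (v : Fin n → ℝ) (i : ℕ) : ∃ K, ∀ x,
    Ilow lam Δ τ A B i (Fin.cons x v : Fin (n + 1) → ℝ)
      = K * segInt lam τ A B i (Fin.cons x v : Fin (n + 1) → ℝ) := by
  refine ⟨∏ k : Fin n, if i ≤ (k : ℕ) then F lam τ (v k) (Δ - T v i k) else 1, fun x => ?_⟩
  rw [Ilow, segInt, Fin.prod_univ_succ]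
  simp [T_cons_succ_succ]

end Reduction

noncomputable def expPoly (c0 c1 c2 c3 c4 μ d0 d1 x : ℝ) : ℝ :=
  c0 + c1 * x + c2 * x ^ 2 + c3 * x ^ 3 + c4 * x ^ 4 + exp (μ * x) * (d0 + d1 * x)

lemma hasDerivAt_expPoly (c0 c1 c2 c3 c4 μ d0 d1 x : ℝ) :
    HasDerivAt (expPoly c0 c1 c2 c3 c4 μ d0 d1)
      (expPoly c1 (2 * c2) (3 * c3) (4 * c4) 0 μ (μ * d0 + d1) (μ * d1) x) x := by
  have hx := hasDerivAt_id x
  have h := (((((hasDerivAt_const x c0).add (hx.const_mul c1)).add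
    ((hx.fun_pow 2).const_mul c2)).add ((hx.fun_pow 3).const_mul c3)).add
    ((hx.fun_pow 4).const_mul c4)).add
    ((hasDerivAt_exp_const_mul μ x).mul ((hasDerivAt_const x d0).add (hx.const_mul d1)))
  refine h.congr_deriv ?_
  simp only [expPoly, id, Pi.add_apply]
  push_cast
  ring

lemma eqOn_zero_of_hasDerivAt {f f' : ℝ → ℝ} {U : Set ℝ} (hU : IsOpen U)
    (hf : ∀ x, HasDerivAt f (f' x) x) (h0 : EqOn f 0 U) : EqOn f' 0 U := fun x hx =>
  (hf x).unique <| (hasDerivAt_const x (0 : ℝ)).congr_of_eventuallyEq <|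
    Filter.eventually_of_mem (hU.mem_nhds hx) h0

lemma quartic_coeffs_eq_zero {a b e0 e1 e2 e3 e4 : ℝ} (hab : a < b)
    (h : ∀ x ∈ Ioo a b, e0 + e1 * x + e2 * x ^ 2 + e3 * x ^ 3 + e4 * x ^ 4 = 0) :
    e0 = 0 ∧ e1 = 0 ∧ e2 = 0 ∧ e3 = 0 ∧ e4 = 0 := by
  open Polynomial in
  let p : ℝ[X] := C e0 + C e1 * X + C e2 * X ^ 2 + C e3 * X ^ 3 + C e4 * X ^ 4
  have hp : p = 0 := eq_zero_of_infinite_isRoot p <|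
    (Ioo_infinite hab).mono fun x hx => by simp [p, h x hx]
  have hc : ∀ k, p.coeff k = 0 := fun k => by rw [hp, coeff_zero]
  refine ⟨?_, ?_, ?_, ?_, ?_⟩
  · simpa [p] using hc 0
  · simpa [p] using hc 1
  · simpa [p] using hc 2
  · simpa [p] using hc 3
  · simpa [p] using hc 4

lemma expPoly_coeffs_eq_zero {a b c0 c1 c2 c3 c4 μ d0 d1 : ℝ} (hμ : μ ≠ 0) (hab : a < b)
    (h : EqOn (expPoly c0 c1 c2 c3 c4 μ d0 d1) 0 (Ioo a b)) : c3 = 0 ∧ c4 = 0 := by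
  have h1 := eqOn_zero_of_hasDerivAt isOpen_Ioo (hasDerivAt_expPoly _ _ _ _ _ _ _ _) h
  have h2 := eqOn_zero_of_hasDerivAt isOpen_Ioo (hasDerivAt_expPoly _ _ _ _ _ _ _ _) h1
  -- `(d/dx - μ)²` annihilates the exponential part and leaves a quartic.
  obtain ⟨-, -, -, h3, h4⟩ := quartic_coeffs_eq_zero hab
    (e0 := 2 * c2 - 2 * μ * c1 + μ ^ 2 * c0) (e1 := 6 * c3 - 4 * μ * c2 + μ ^ 2 * c1)
    (e2 := 12 * c4 - 6 * μ * c3 + μ ^ 2 * c2) (e3 := μ ^ 2 * c3 - 8 * μ * c4) (e4 := μ ^ 2 * c4)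
    fun x hx => by
      have e0 := h hx; have e1 := h1 hx; have e2 := h2 hx
      simp only [expPoly, Pi.zero_apply] at e0 e1 e2
      linear_combination e2 - 2 * μ * e1 + μ ^ 2 * e0
  have hμ2 : μ ^ 2 ≠ 0 := pow_ne_zero 2 hμ
  have hc4 : c4 = 0 := (mul_eq_zero.mp h4).resolve_left hμ2
  exact ⟨(mul_eq_zero.mp (by linear_combination h3 + 8 * μ * hc4)).resolve_left hμ2, hc4⟩

def ExpPolyOn (lam ε c3 c4 : ℝ) (φ : ℝ → ℝ) : Prop :=
  ∃ c0 c1 c2 d0 d1 : ℝ, ∀ x ∈ Ioo 0 ε,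
    φ x = exp (-lam * x) * expPoly c0 c1 c2 c3 c4 (2 * lam) d0 d1 x

namespace ExpPolyOn

variable {lam ε c3 c4 c3' c4' : ℝ} {φ ψ : ℝ → ℝ}

lemma zero : ExpPolyOn lam ε 0 0 fun _ => 0 :=
  ⟨0, 0, 0, 0, 0, fun x _ => by simp [expPoly]⟩

lemma congr (h : ExpPolyOn lam ε c3 c4 φ) (heq : ∀ x ∈ Ioo 0 ε, ψ x = φ x) :
    ExpPolyOn lam ε c3 c4 ψ := by
  obtain ⟨c0, c1, c2, d0, d1, h⟩ := h
  exact ⟨c0, c1, c2, d0, d1, fun x hx => (heq x hx).trans (h x hx)⟩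

lemma add (h : ExpPolyOn lam ε c3 c4 φ) (h' : ExpPolyOn lam ε c3' c4' ψ) :
    ExpPolyOn lam ε (c3 + c3') (c4 + c4') fun x => φ x + ψ x := by
  obtain ⟨c0, c1, c2, d0, d1, h⟩ := h
  obtain ⟨c0', c1', c2', d0', d1', h'⟩ := h'
  refine ⟨c0 + c0', c1 + c1', c2 + c2', d0 + d0', d1 + d1', fun x hx => ?_⟩
  dsimp only
  rw [h x hx, h' x hx]
  simp only [expPoly]
  ring

lemma const_mul (K : ℝ) (h : ExpPolyOn lam ε c3 c4 φ) :
    ExpPolyOn lam ε (K * c3) (K * c4) fun x => K * φ x := by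
  obtain ⟨c0, c1, c2, d0, d1, h⟩ := h
  refine ⟨K * c0, K * c1, K * c2, K * d0, K * d1, fun x hx => ?_⟩
  dsimp only
  rw [h x hx]
  simp only [expPoly]
  ring

lemma coeffs_eq_zero (h : ExpPolyOn lam ε c3 c4 φ) (hlam : lam ≠ 0) (hε : 0 < ε)
    (hφ : ∀ x ∈ Ioo 0 ε, φ x = 0) : c3 = 0 ∧ c4 = 0 := by
  obtain ⟨c0, c1, c2, d0, d1, h⟩ := h
  exact expPoly_coeffs_eq_zero (mul_ne_zero two_ne_zero hlam) hε fun x hx =>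
    (mul_eq_zero.mp ((h x hx).symm.trans (hφ x hx))).resolve_left (exp_pos _).ne'

end ExpPolyOn

section Shapes

variable {n : ℕ} {lam Δ τ A B ε : ℝ}

lemma expPolyOn_segInt_cons (hlam : 0 < lam) {v : Fin n → ℝ} (hv : ∀ k, 0 < v k)
    (hvτ : ∀ k, v k ≤ τ) (hετ : ε ≤ τ) (i : ℕ) (hi : i ≤ n) :
    ∃ γ, ExpPolyOn lam ε (γ * A) 0
      fun x => segInt lam τ A B i (Fin.cons x v : Fin (n + 1) → ℝ) := by
  have hpos : ∀ x, 0 < x → ∀ k, 0 < (Fin.cons x v : Fin (n + 1) → ℝ) k :=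
    fun x hx k => Fin.cases hx hv k
  cases i with
  | zero =>
    refine ⟨lam ^ 3 / 6, ⟨0, -(lam * B / 4), lam ^ 2 * A / 2, 0, lam * B / 4, fun x hx => ?_⟩⟩
    have h := segInt_eq (lam := lam) (A := A) (B := B) (hpos x hx.1) 0 (hx.2.le.trans hετ)
    simp only [Fin.val_zero, Fin.cons_zero, T_zero_zero, freeDensityProd_zero, zero_add] at h
    dsimp only
    rw [h, integral_g_mul_branch hlam.ne', expPoly, mul_zero, exp_zero]
    field_simp
    ring
  | succ j =>
    have hj : j < n := hi
    set S := T v 0 j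
    set K := lam ^ 2 * freeDensityProd lam v j * (lam ^ 2 * exp (-lam * v ⟨j, hj⟩))
    refine ⟨0, ⟨0, K * A * (v ⟨j, hj⟩ ^ 2 / 2 + lam * v ⟨j, hj⟩ ^ 3 / 6), 0, 0,
      K * B * (exp (2 * lam * (S + v ⟨j, hj⟩)) - exp (2 * lam * S)) * (v ⟨j, hj⟩ / (4 * lam)),
      fun x hx => ?_⟩⟩
    have h := segInt_eq (lam := lam) (τ := τ) (A := A) (B := B) (hpos x hx.1) (Fin.succ ⟨j, hj⟩)
      (by rw [Fin.cons_succ]; exact hvτ _)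
    simp only [Fin.val_succ, Fin.cons_succ, T_cons_zero_succ, freeDensityProd_cons_succ] at h
    dsimp only
    rw [h, integral_g_mul_branch hlam.ne', expPoly, freeDensity]
    simp only [K, S, exp_two_mul_add]
    field_simp
    ring

lemma expPolyOn_sum_Ilow_cons (hlam : 0 < lam) {v : Fin n → ℝ} (hv : ∀ k, 0 < v k)
    (hvτ : ∀ k, v k ≤ τ) (hετ : ε ≤ τ) :
    ∃ γ, ExpPolyOn lam ε (γ * A) 0
      fun x => ∑ i ∈ Finset.range n, Ilow lam Δ τ A B i (Fin.cons x v : Fin (n + 1) → ℝ) := by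
  suffices ∀ k ≤ n, ∃ γ, ExpPolyOn lam ε (γ * A) 0
      fun x => ∑ i ∈ Finset.range k, Ilow lam Δ τ A B i (Fin.cons x v : Fin (n + 1) → ℝ) from
    this n le_rfl
  intro k hk
  induction k with
  | zero => exact ⟨0, by simpa using ExpPolyOn.zero⟩
  | succ k ih =>
    obtain ⟨γ, hγ⟩ := ih (by omega)
    obtain ⟨K, hK⟩ := exists_Ilow_cons_eq (lam := lam) (Δ := Δ) (τ := τ) (A := A) (B := B) v k
    obtain ⟨γ', hγ'⟩ := expPolyOn_segInt_cons (B := B) hlam hv hvτ hετ k (by omega)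
    refine ⟨γ + K * γ', ?_⟩
    simp only [Finset.sum_range_succ, hK]
    convert hγ.add (hγ'.const_mul K) using 1 <;> ring

lemma expPolyOn_Itop_cons (hlam : 0 < lam) {v : Fin n → ℝ} (hv : ∀ k, 0 < v k)
    (hvτ : ∀ k, v k ≤ τ) (hετ : ε ≤ τ) (hεΔ : T v 0 n + ε ≤ Δ) :
    ∃ γ, ExpPolyOn lam ε (γ * A) 0
      fun x => Itop lam Δ τ A B (Fin.cons x v : Fin (n + 1) → ℝ) := by
  obtain ⟨γ, hseg⟩ := expPolyOn_segInt_cons (A := A) (B := B) hlam hv hvτ hετ n le_rfl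
  set S := T v 0 n
  set K := lam ^ 2 * freeDensityProd lam v n
  have htail : ExpPolyOn lam ε 0 0 fun x =>
      freeDensityProd lam (Fin.cons x v : Fin (n + 1) → ℝ) (n + 1)
        * ((∫ s in T (Fin.cons x v : Fin (n + 1) → ℝ) 0 (n + 1)..Δ, g lam A B s) + aC lam Δ) := by
    refine ⟨0, K * (A * (Δ - S) + B * exp (2 * lam * Δ) / (2 * lam) + aC lam Δ), -(K * A), 0,
      -(K * B * exp (2 * lam * S) / (2 * lam)), fun x _ => ?_⟩
    dsimp only
    rw [freeDensityProd_cons_succ, T_cons_zero_succ, integral_g hlam.ne', exp_two_mul_add,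
      expPoly, freeDensity]
    simp only [K, S]
    field_simp
    ring
  refine ⟨γ, ?_⟩
  convert (hseg.add htail).congr fun x hx => ?_ using 1
  · ring
  · ring
  · have hτ : ∀ k, (Fin.cons x v : Fin (n + 1) → ℝ) k ≤ τ :=
      fun k => Fin.cases (hx.2.le.trans hετ) hvτ k
    refine Itop_eq_of_lt (fun k => Fin.cases hx.1 hv k) (hτ _) ?_
    rw [T_cons_zero_succ]
    linarith [hx.2]

lemma expPolyOn_Itop_cons_long (hlam : 0 < lam) {w : Fin (n + 1) → ℝ} (hw : ∀ k, 0 < w k)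
    (hwτ : ∀ k, w k ≤ τ) (hΔw : Δ ≤ w (Fin.last n)) (hεΔ : T w 0 n + ε ≤ Δ) :
    ∃ κ > 0, ∃ γ, ExpPolyOn lam ε (γ * A - κ * (B * exp (2 * lam * Δ) / 2 + aC lam Δ * lam))
      (κ * lam * A / 3) fun x => Itop lam Δ τ A B (Fin.cons x w : Fin (n + 2) → ℝ) := by
  set S := T w 0 n
  set tm := w (Fin.last n)
  set D := Δ - S
  set a := aC lam Δ
  set κ := lam ^ 2 * freeDensityProd lam w n * (lam ^ 2 * exp (-lam * tm))
  have hκ : 0 < κ := by have := freeDensityProd_pos hlam hw n; positivity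
  have hS : 0 ≤ S := by
    simpa [T_zero_zero] using T_zero_mono (fun k => (hw k).le) (Nat.zero_le n)
  -- The bracket of `Itop_eq_of_sub_le_last` is `p0 + p1 y + p2 y² + p3 y³` in `y = D - x`;
  -- the witnesses below are the coefficients of `κ x` times it.
  set p3 := -(lam * A / 3)
  set p2 := A * (lam * tm - 1) / 2 - B * exp (2 * lam * Δ) / 2 - a * lam
  set p1 := A * tm + B * exp (2 * lam * Δ) * tm / 2 + a * (lam * tm - 1)
  set p0 := B * exp (2 * lam * Δ) * tm / (4 * lam) + a * tm
  refine ⟨κ, hκ, κ * ((lam * tm - 1) / 2 - lam * D), 0, κ * (p0 + p1 * D + p2 * D ^ 2 + p3 * D ^ 3),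
    -(κ * (p1 + 2 * p2 * D + 3 * p3 * D ^ 2)), 0, -(κ * B * exp (2 * lam * S) * tm / (4 * lam)),
    fun x hx => ?_⟩
  have h := Itop_eq_of_sub_le_last (lam := lam) (Δ := Δ) (τ := τ) (A := A) (B := B)
    (t := (Fin.cons x w : Fin (n + 2) → ℝ)) (fun k => Fin.cases hx.1 hw k)
    (by rw [T_cons_zero_succ]; linarith [hx.2])
    (by rw [T_cons_zero_succ, Fin.cons_last]; linarith [hx.1])
    (by rw [Fin.cons_last]; exact hwτ _)
  dsimp only
  rw [h, Fin.cons_last, T_cons_zero_succ, freeDensityProd_cons_succ,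
    integral_g_mul_branch hlam.ne', exp_two_mul_add, expPoly, freeDensity]
  simp only [p0, p1, p2, p3, κ, D, a, S, tm]
  field_simp
  ring

lemma expPolyOn_J_cons (hlam : 0 < lam) {v : Fin n → ℝ} (hv : ∀ k, 0 < v k)
    (hvτ : ∀ k, v k ≤ τ) (hετ : ε ≤ τ) (hεΔ : T v 0 n + ε ≤ Δ) :
    ∃ γ, ExpPolyOn lam ε (γ * A) 0 fun x => J lam Δ τ A B (Fin.cons x v : Fin (n + 1) → ℝ) := by
  obtain ⟨γ, hsum⟩ := expPolyOn_sum_Ilow_cons (Δ := Δ) (A := A) (B := B) hlam hv hvτ hετ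
  obtain ⟨γ', htop⟩ := expPolyOn_Itop_cons (A := A) (B := B) hlam hv hvτ hετ hεΔ
  exact ⟨γ + γ', by convert hsum.add htop using 1 <;> first | rfl | ring⟩

lemma expPolyOn_J_cons_long (hlam : 0 < lam) {w : Fin (n + 1) → ℝ} (hw : ∀ k, 0 < w k)
    (hwτ : ∀ k, w k ≤ τ) (hΔw : Δ ≤ w (Fin.last n)) (hετ : ε ≤ τ) (hεΔ : T w 0 n + ε ≤ Δ) :
    ∃ κ > 0, ∃ γ, ExpPolyOn lam ε (γ * A - κ * (B * exp (2 * lam * Δ) / 2 + aC lam Δ * lam))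
      (κ * lam * A / 3) fun x => J lam Δ τ A B (Fin.cons x w : Fin (n + 2) → ℝ) := by
  obtain ⟨γ, hsum⟩ := expPolyOn_sum_Ilow_cons (Δ := Δ) (A := A) (B := B) hlam hw hwτ hετ
  obtain ⟨κ, hκ, γ', htop⟩ := expPolyOn_Itop_cons_long (A := A) (B := B) hlam hw hwτ hΔw hεΔ
  exact ⟨κ, hκ, γ + γ', by convert hsum.add htop using 1 <;> first | rfl | ring⟩

end Shapes

lemma Fin.init_cons {α : Type*} {n : ℕ} (x : α) (w : Fin (n + 1) → α) :
    Fin.init (Fin.cons x w : Fin (n + 2) → α) = Fin.cons x (Fin.init w) := by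
  ext k
  refine Fin.cases ?_ (fun j => ?_) k
  · rfl
  · simp [Fin.init]

lemma aC_pos {lam Δ : ℝ} (hlam : 0 ≤ lam) (hΔ : 0 ≤ Δ) : 0 < aC lam Δ := by
  unfold aC
  have : 0 ≤ lam * Δ := mul_nonneg hlam hΔ
  positivity

theorem not_exists_J_cons_eq_mul_J_cons_init {n : ℕ} {lam Δ τ A B ε : ℝ} (hlam : 0 < lam)
    (hg : ∀ s ∈ Ioo 0 Δ, 0 < g lam A B s) {w : Fin (n + 1) → ℝ} (hw : ∀ k, 0 < w k)
    (hwτ : ∀ k, w k ≤ τ) (hΔw : Δ ≤ w (Fin.last n)) (hε : 0 < ε) (hεΔ : T w 0 n + ε ≤ Δ) :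
    ¬ ∃ q, ∀ x ∈ Ioo 0 ε, J lam Δ τ A B (Fin.cons x w : Fin (n + 2) → ℝ)
      = q * J lam Δ τ A B (Fin.cons x (Fin.init w) : Fin (n + 1) → ℝ) := by
  rintro ⟨q, hq⟩
  have hS : 0 ≤ T w 0 n := by
    simpa [T_zero_zero] using T_zero_mono (fun k => (hw k).le) (Nat.zero_le n)
  have hετ : ε ≤ τ := by linarith [hwτ (Fin.last n)]
  obtain ⟨κ, hκ, γ, hlong⟩ := expPolyOn_J_cons_long (A := A) (B := B) hlam hw hwτ hΔw hετ hεΔ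
  obtain ⟨γ', hshort⟩ := expPolyOn_J_cons (Δ := Δ) (A := A) (B := B) (v := Fin.init w) hlam
    (fun k => hw _) (fun k => hwτ _) hετ (by rwa [T_init_zero_last])
  obtain ⟨h3, h4⟩ := (hlong.add (hshort.const_mul (-q))).coeffs_eq_zero hlam.ne' hε
    fun x hx => by rw [hq x hx]; ring
  have hA : A = 0 := by
    have : κ * lam * A = 0 := by linarith
    simpa [hκ.ne', hlam.ne'] using this
  subst hA
  have hB : 0 < B := by
    have h := hg (Δ / 2) ⟨by linarith, by linarith⟩
    simp only [g, zero_add] at h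
    exact pos_of_mul_pos_left h (exp_pos _).le
  have : 0 < κ * (B * exp (2 * lam * Δ) / 2 + aC lam Δ * lam) := by
    have := aC_pos hlam.le (by linarith : 0 ≤ Δ)
    positivity
  linarith

/-- non-Markovian property: assume `g > 0` on `(0, Δ)`. For every
`m = n+1 ≥ 1` there is no function `Q` of the last `m` intervals such that
`J_m(t₀,…,t_m) = Q(t₁,…,t_m) · J_{m−1}(t₀,…,t_{m−1})` on the domain
`{t_j > 0 ∀ j, Σ_{j=0}^{m−1} t_j < Δ, t_m < τ}`: the conditional density necessarily
depends on `t₀`, so the ISI sequence is not a Markov chain of any finite order. -/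
theorem stmt15 (lam Δ τ A B : ℝ) (hlam : 0 < lam) (hΔ : 0 < Δ) (hΔτ : Δ < τ)
    (hg : ∀ s ∈ Set.Ioo (0 : ℝ) Δ, 0 < g lam A B s) (n : ℕ) :
    ¬ ∃ Q : (Fin (n + 1) → ℝ) → ℝ,
      ∀ t : Fin (n + 2) → ℝ,
        (∀ j, 0 < t j) → T t 0 (n + 1) < Δ → t (Fin.last (n + 1)) < τ →
          J lam Δ τ A B t = Q (Fin.tail t) * J lam Δ τ A B (Fin.init t) := by
  rintro ⟨Q, hQ⟩
  set d := Δ / (n + 1)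
  have hd : 0 < d := by positivity
  have hnd : n * d + d = Δ := by simp only [d]; field_simp
  have hdτ : d < τ := by have := mul_nonneg (Nat.cast_nonneg n) hd.le; linarith
  let w : Fin (n + 1) → ℝ := Fin.snoc (fun _ => d) ((Δ + τ) / 2)
  have hw : ∀ k, 0 < w k := Fin.lastCases (by simp [w]; linarith) fun k => by simp [w, hd]
  have hTw : T w 0 n = n * d := by simp [T, w, Fin.sum_univ_castSucc]
  refine not_exists_J_cons_eq_mul_J_cons_init (τ := τ) hlam hg hw
    (Fin.lastCases (by simp [w]; linarith) fun k => by simp [w, hdτ.le])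
    (by simp [w]; linarith) hd (by rw [hTw, hnd]) ⟨Q w, fun x hx => ?_⟩
  have h := hQ (Fin.cons x w) (fun k => Fin.cases hx.1 hw k)
    (by rw [T_cons_zero_succ, hTw]; linarith [hx.2]) (by simp [w]; linarith)
  rwa [Fin.tail_cons, Fin.init_cons] at h
end
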